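/- Let (X, μ) be a σ-finite measure space, let K ≥ 1, let π₁, …, π_K > 0 with Σ_k π_k = 1, let β ≥ 0, and suppose the data density has the mixture form p_data(x) = Σ_k π_k q_k(x) where q₁, …, q_K : X → [0,∞) are densities (∫ q_k dμ = 1) that are well-separated: for every k and μ-almost every x, q_k(x) > 0 implies q_j(x) = 0 for all j ≠ k. Then the choice g_k = q_k for every k achieves 2·JSD(P_data‖P_mix) − β·JSD_π(g₁,…,g_K) = −β·Σ_k π_k log(1/π_k), where P_mix is the measure with density Σ_j π_j g_j (so P_mix = P_data), JSD(P‖Q) = ½KL(P‖½(P+Q)) + ½KL(Q‖½(P+Q)), and JSD_π(g₁,…,g_K) = Σ_k π_k ∫ g_k log(g_k/Σ_j π_j g_j) dμ. Consequently, for any densities g₁, …, g_K, 2·JSD(P_data‖P_mix) − β·JSD_π(g₁,…,g_K) ≥ −β·Σ_k π_k log(1/π_k), so (q₁,…,q_K) is a global minimizer and the minimal objective value is −β·H(π) = −β·Σ_k π_k log(1/π_k). -/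
import Mathlib

open MeasureTheory

/-- Kullback–Leibler divergence `KL(P‖Q) = ∫ log (dP/dQ) dP`. -/
noncomputable def KLdiv {X : Type*} [MeasurableSpace X] (P Q : Measure X) : ℝ :=
  ∫ x, MeasureTheory.llr P Q x ∂P

/-- Jensen–Shannon divergence
`JSD(P‖Q) = ½ KL(P‖M) + ½ KL(Q‖M)` where `M = ½ (P + Q)`. -/
noncomputable def JSDiv {X : Type*} [MeasurableSpace X] (P Q : Measure X) : ℝ :=
  (KLdiv P ((2 : ENNReal)⁻¹ • (P + Q)) + KLdiv Q ((2 : ENNReal)⁻¹ • (P + Q))) / 2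

lemma KLdiv_nonneg {X : Type*} [MeasurableSpace X] (P M : Measure X)
    [IsProbabilityMeasure P] [IsProbabilityMeasure M]
    (hPM : P ≪ M) : 0 ≤ KLdiv P M := by
  by_cases hint : Integrable (llr P M) P
  · have hbound : (fun x => 1 - (M.rnDeriv P x).toReal) ≤ᵐ[P] llr P M := by
      filter_upwards [Measure.rnDeriv_pos hPM, hPM.ae_le (Measure.rnDeriv_lt_top P M),
        Measure.inv_rnDeriv hPM] with x hpos hlt hinv
      have ht : 0 < (P.rnDeriv M x).toReal := ENNReal.toReal_pos hpos.ne' hlt.ne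
      have hrw : (M.rnDeriv P x).toReal = ((P.rnDeriv M x).toReal)⁻¹ := by
        rw [← ENNReal.toReal_inv, ← hinv]; rfl
      have := Real.one_sub_inv_le_log_of_pos ht
      simpa [llr, hrw] using this
    have hintM : Integrable (fun x => 1 - (M.rnDeriv P x).toReal) P :=
      (integrable_const 1).sub Measure.integrable_toReal_rnDeriv
    have hle : ∫ x, (M.rnDeriv P x).toReal ∂P ≤ (M Set.univ).toReal := by
      rw [← setIntegral_univ]
      exact Measure.setIntegral_toReal_rnDeriv_le (measure_ne_top M _)
    have h1 : ∫ x, (1 - (M.rnDeriv P x).toReal) ∂P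
        = 1 - ∫ x, (M.rnDeriv P x).toReal ∂P := by
      rw [integral_sub (integrable_const 1) Measure.integrable_toReal_rnDeriv]
      simp
    have h2 : (0:ℝ) ≤ ∫ x, (1 - (M.rnDeriv P x).toReal) ∂P := by
      rw [h1]
      have hm1 : (M Set.univ).toReal = 1 := by simp
      linarith [hle, hm1.le]
    exact h2.trans (integral_mono_ae hintM hint hbound)
  · rw [KLdiv, integral_undef hint]

lemma ac_half_add_left {X : Type*} [MeasurableSpace X] (P Q : Measure X) :
    P ≪ (2 : ENNReal)⁻¹ • (P + Q) := by
  intro s hs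
  simp only [Measure.smul_apply, Measure.add_apply, smul_eq_mul] at hs
  rcases mul_eq_zero.1 hs with h | h
  · exact absurd h (by simp)
  · exact (add_eq_zero.1 h).1

lemma ac_half_add_right {X : Type*} [MeasurableSpace X] (P Q : Measure X) :
    Q ≪ (2 : ENNReal)⁻¹ • (P + Q) := by
  intro s hs
  simp only [Measure.smul_apply, Measure.add_apply, smul_eq_mul] at hs
  rcases mul_eq_zero.1 hs with h | h
  · exact absurd h (by simp)
  · exact (add_eq_zero.1 h).2

lemma prob_half_add {X : Type*} [MeasurableSpace X] (P Q : Measure X)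
    [IsProbabilityMeasure P] [IsProbabilityMeasure Q] :
    IsProbabilityMeasure ((2 : ENNReal)⁻¹ • (P + Q)) := by
  constructor
  rw [Measure.smul_apply, Measure.add_apply, measure_univ, measure_univ, smul_eq_mul,
    one_add_one_eq_two, ENNReal.inv_mul_cancel two_ne_zero ENNReal.ofNat_ne_top]

lemma JSDiv_nonneg {X : Type*} [MeasurableSpace X] (P Q : Measure X)
    [IsProbabilityMeasure P] [IsProbabilityMeasure Q] : 0 ≤ JSDiv P Q := by
  haveI := prob_half_add P Q
  have h1 := KLdiv_nonneg P _ (ac_half_add_left P Q)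
  have h2 := KLdiv_nonneg Q _ (ac_half_add_right P Q)
  unfold JSDiv; linarith

lemma mix_prob {X : Type*} [MeasurableSpace X] (μ : Measure X) (K : ℕ) (w : Fin K → ℝ)
    (hw : ∀ k, 0 < w k) (hw1 : ∑ k, w k = 1) (g : Fin K → X → ℝ)
    (hg0 : ∀ k x, 0 ≤ g k x) (hgint : ∀ k, Integrable (g k) μ)
    (hg1 : ∀ k, ∫ x, g k x ∂μ = 1) :
    IsProbabilityMeasure (μ.withDensity fun x => ENNReal.ofReal (∑ j, w j * g j x)) := by
  have hint : Integrable (fun x => ∑ j, w j * g j x) μ :=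
    integrable_finset_sum _ (fun j _ => (hgint j).const_mul (w j))
  have h0 : 0 ≤ᵐ[μ] fun x => ∑ j, w j * g j x :=
    Filter.Eventually.of_forall fun x =>
      Finset.sum_nonneg fun j _ => mul_nonneg (hw j).le (hg0 j x)
  constructor
  have hI : ∫ x, (∑ j, w j * g j x) ∂μ = 1 := by
    rw [integral_finset_sum _ (fun j _ => (hgint j).const_mul (w j))]
    simp_rw [integral_const_mul, hg1, mul_one]
    exact hw1
  rw [withDensity_apply _ MeasurableSet.univ, setLIntegral_univ,
    ← ofReal_integral_eq_lintegral_ofReal hint h0, hI]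
  simp

lemma term_le {X : Type*} [MeasurableSpace X] (μ : Measure X) {K : ℕ} (w : Fin K → ℝ)
    (hw : ∀ k, 0 < w k) (g : Fin K → X → ℝ) (hgm : ∀ k, Measurable (g k))
    (hg0 : ∀ k x, 0 ≤ g k x) (hgint : ∀ k, Integrable (g k) μ)
    (hg1 : ∀ k, ∫ x, g k x ∂μ = 1) (k : Fin K) (hwk : w k ≤ 1) :
    ∫ x in {x | 0 < ∑ j, w j * g j x},
        g k x * Real.log (g k x / ∑ j, w j * g j x) ∂μ
      ≤ Real.log (1 / w k) := by
  set S : Set X := {x | 0 < ∑ j, w j * g j x} with hSdef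
  have hS : MeasurableSet S :=
    measurableSet_lt measurable_const (Finset.univ.measurable_sum
      fun j _ => (hgm j).const_mul (w j))
  have hlog0 : 0 ≤ Real.log (1 / w k) :=
    Real.log_nonneg (by rw [le_div_iff₀ (hw k)]; linarith)
  by_cases hfi : IntegrableOn (fun x => g k x * Real.log (g k x / ∑ j, w j * g j x)) S μ
  · have hpt : ∀ x ∈ S, g k x * Real.log (g k x / ∑ j, w j * g j x)
        ≤ Real.log (1 / w k) * g k x := by
      intro x hx
      rcases (hg0 k x).eq_or_lt with h | h
      · simp [← h]
      · have hs : 0 < ∑ j, w j * g j x := hx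
        have hle : w k * g k x ≤ ∑ j, w j * g j x :=
          Finset.single_le_sum (fun j _ => mul_nonneg (hw j).le (hg0 j x))
            (Finset.mem_univ k)
        have hdiv : g k x / (∑ j, w j * g j x) ≤ 1 / w k := by
          rw [div_le_div_iff₀ hs (hw k)]
          nlinarith [hle]
        calc g k x * Real.log (g k x / ∑ j, w j * g j x)
            ≤ g k x * Real.log (1 / w k) :=
              mul_le_mul_of_nonneg_left (Real.log_le_log (div_pos h hs) hdiv) h.le
          _ = Real.log (1 / w k) * g k x := mul_comm _ _
    calc ∫ x in S, g k x * Real.log (g k x / ∑ j, w j * g j x) ∂μ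
        ≤ ∫ x in S, Real.log (1 / w k) * g k x ∂μ :=
          setIntegral_mono_on hfi ((hgint k).const_mul _).integrableOn hS hpt
      _ = Real.log (1 / w k) * ∫ x in S, g k x ∂μ := integral_const_mul _ _
      _ ≤ Real.log (1 / w k) * 1 := by
          refine mul_le_mul_of_nonneg_left ?_ hlog0
          rw [← hg1 k]
          exact setIntegral_le_integral (hgint k)
            (Filter.Eventually.of_forall (hg0 k))
      _ = Real.log (1 / w k) := mul_one _
  · rw [integral_undef hfi]; exact hlog0

lemma term_eq {X : Type*} [MeasurableSpace X] (μ : Measure X) {K : ℕ} (w : Fin K → ℝ)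
    (hw : ∀ k, 0 < w k) (q : Fin K → X → ℝ) (hqm : ∀ k, Measurable (q k))
    (hq0 : ∀ k x, 0 ≤ q k x) (hqint : ∀ k, Integrable (q k) μ)
    (hq1 : ∀ k, ∫ x, q k x ∂μ = 1)
    (hsep : ∀ k, ∀ᵐ x ∂μ, 0 < q k x → ∀ j, j ≠ k → q j x = 0) (k : Fin K) :
    ∫ x in {x | 0 < ∑ j, w j * q j x},
        q k x * Real.log (q k x / ∑ j, w j * q j x) ∂μ
      = Real.log (1 / w k) := by
  set S : Set X := {x | 0 < ∑ j, w j * q j x} with hSdef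
  have hS : MeasurableSet S :=
    measurableSet_lt measurable_const (Finset.univ.measurable_sum
      fun j _ => (hqm j).const_mul (w j))
  have hcong : ∀ᵐ x ∂μ, x ∈ S →
      q k x * Real.log (q k x / ∑ j, w j * q j x) = Real.log (1 / w k) * q k x := by
    filter_upwards [hsep k] with x hx hxS
    rcases (hq0 k x).eq_or_lt with h | h
    · simp [← h]
    · have hj := hx h
      have hsum : ∑ j, w j * q j x = w k * q k x :=
        Finset.sum_eq_single k (fun j _ hj' => by rw [hj j hj', mul_zero])
          (fun h' => absurd (Finset.mem_univ k) h')
      have hq : q k x / (w k * q k x) = 1 / w k := by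
        rw [mul_comm, ← div_div, div_self h.ne']
      rw [hsum, hq, mul_comm]
  rw [setIntegral_congr_ae hS hcong, integral_const_mul]
  have hcompl : ∀ x ∈ Sᶜ, q k x = 0 := by
    intro x hx
    have hns : ¬(0 < ∑ j, w j * q j x) := hx
    push_neg at hns
    have hle : w k * q k x ≤ ∑ j, w j * q j x :=
      Finset.single_le_sum (fun j _ => mul_nonneg (hw j).le (hq0 j x))
        (Finset.mem_univ k)
    have h0' : 0 ≤ w k * q k x := mul_nonneg (hw k).le (hq0 k x)
    have hz : w k * q k x = 0 := le_antisymm (by linarith) h0'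
    exact (mul_eq_zero.1 hz).resolve_left (hw k).ne'
  have h0c : ∫ x in Sᶜ, q k x ∂μ = 0 := by
    rw [setIntegral_congr_fun hS.compl hcompl]
    simp
  have hadd := integral_add_compl hS (hqint k)
  rw [hq1 k, h0c] at hadd
  have hSI : ∫ x in S, q k x ∂μ = 1 := by linarith
  rw [hSI, mul_one]

/-- Theorem 2 (Theorem 3 in the appendix) of the MGAN paper: if the data
density is the well-separated mixture `pdata = ∑ k, w k * q k`, then choosing
the generator densities `g k = q k` achieves
`2 JSD(P_data‖P_mix) - β JSD_w(g 1,…,g K) = -β ∑ k, w k * log (1 / w k)`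
(first conjunct, with `P_mix` the measure with density `∑ j, w j * q j`,
so `P_mix = P_data`), and for arbitrary generator densities `g 1, …, g K`
the objective is bounded below by this value (second conjunct); hence
`(q 1, …, q K)` is a global minimizer with minimal value `-β H(w)`. Here
`JSD_w(g 1,…,g K) = ∑ k, w k * ∫_{gmix>0} g k * log (g k / gmix) ∂μ` with
`gmix = ∑ j, w j * g j`. -/
theorem mgan_global_minimum
    {X : Type*} [MeasurableSpace X] (μ : Measure X) [SigmaFinite μ]
    (K : ℕ) (hK : 1 ≤ K)
    (w : Fin K → ℝ) (hw : ∀ k, 0 < w k) (hw1 : ∑ k, w k = 1)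
    (beta : ℝ) (hbeta : 0 ≤ beta)
    (q : Fin K → X → ℝ)
    (hqm : ∀ k, Measurable (q k)) (hq0 : ∀ k x, 0 ≤ q k x)
    (hqint : ∀ k, Integrable (q k) μ) (hq1 : ∀ k, ∫ x, q k x ∂μ = 1)
    (hsep : ∀ k, ∀ᵐ x ∂μ, 0 < q k x → ∀ j, j ≠ k → q j x = 0)
    (pdata : X → ℝ) (hpdata : ∀ x, pdata x = ∑ k, w k * q k x)
    (Pdata : Measure X)
    (hPdata : Pdata = μ.withDensity fun x => ENNReal.ofReal (pdata x)) :
    (2 * JSDiv Pdata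
          (μ.withDensity fun x => ENNReal.ofReal (∑ j, w j * q j x))
        - beta * (∑ k, w k * ∫ x in {x | 0 < ∑ j, w j * q j x},
            q k x * Real.log (q k x / ∑ j, w j * q j x) ∂μ)
      = -(beta * ∑ k, w k * Real.log (1 / w k))) ∧
    (∀ g : Fin K → X → ℝ, (∀ k, Measurable (g k)) → (∀ k x, 0 ≤ g k x) →
      (∀ k, Integrable (g k) μ) → (∀ k, ∫ x, g k x ∂μ = 1) →
      2 * JSDiv Pdata
            (μ.withDensity fun x => ENNReal.ofReal (∑ j, w j * g j x))
          - beta * (∑ k, w k * ∫ x in {x | 0 < ∑ j, w j * g j x},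
              g k x * Real.log (g k x / ∑ j, w j * g j x) ∂μ)
        ≥ -(beta * ∑ k, w k * Real.log (1 / w k))) := by
  have hPq : Pdata = μ.withDensity fun x => ENNReal.ofReal (∑ j, w j * q j x) := by
    rw [hPdata]; congr 1; funext x; rw [hpdata]
  haveI hPprob : IsProbabilityMeasure Pdata := by
    rw [hPq]; exact mix_prob μ K w hw hw1 q hq0 hqint hq1
  constructor
  · rw [← hPq]
    have hM : (2 : ENNReal)⁻¹ • (Pdata + Pdata) = Pdata := by
      rw [← two_smul ENNReal Pdata, smul_smul,
        ENNReal.inv_mul_cancel two_ne_zero ENNReal.ofNat_ne_top, one_smul]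
    have hKL : KLdiv Pdata ((2 : ENNReal)⁻¹ • (Pdata + Pdata)) = 0 := by
      rw [hM, KLdiv]
      have h0 : llr Pdata Pdata =ᵐ[Pdata] fun _ => 0 := by
        filter_upwards [Measure.rnDeriv_self Pdata] with x hx
        simp [llr, hx]
      rw [integral_congr_ae h0, integral_zero]
    have hJ : JSDiv Pdata Pdata = 0 := by rw [JSDiv, hKL]; norm_num
    rw [hJ]
    have hsum : (∑ k, w k * ∫ x in {x | 0 < ∑ j, w j * q j x},
        q k x * Real.log (q k x / ∑ j, w j * q j x) ∂μ)
        = ∑ k, w k * Real.log (1 / w k) :=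
      Finset.sum_congr rfl fun k _ => by
        rw [term_eq μ w hw q hqm hq0 hqint hq1 hsep k]
    rw [hsum]; ring
  · intro g hgm hg0 hgint hg1
    haveI hG : IsProbabilityMeasure
        (μ.withDensity fun x => ENNReal.ofReal (∑ j, w j * g j x)) :=
      mix_prob μ K w hw hw1 g hg0 hgint hg1
    have hJ := JSDiv_nonneg Pdata
      (μ.withDensity fun x => ENNReal.ofReal (∑ j, w j * g j x))
    have hsum : (∑ k, w k * ∫ x in {x | 0 < ∑ j, w j * g j x},
        g k x * Real.log (g k x / ∑ j, w j * g j x) ∂μ)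
        ≤ ∑ k, w k * Real.log (1 / w k) := by
      refine Finset.sum_le_sum fun k _ => ?_
      have hwk1 : w k ≤ 1 :=
        hw1 ▸ Finset.single_le_sum (fun j _ => (hw j).le) (Finset.mem_univ k)
      exact mul_le_mul_of_nonneg_left
        (term_le μ w hw g hgm hg0 hgint hg1 k hwk1) (hw k).le
    have hb := mul_le_mul_of_nonneg_left hsum hbeta
    linarith
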